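/- Let χ : ℤ³ × ℤ³ → ℤ be the Euler form χ(u,v) = Σᵢ uᵢvᵢ - 2(u₁v₂ + u₂v₃) + 2u₁v₃, and let p = (1,1,1). There is no vector v ∈ ℤ³ with χ(v,v) = 1 and χ(p,v) = 0 and χ(v,p) = 0. (Hence the exceptional object P of Bondal's quiver is numerically nonextendable.) -/
import Mathlib


/-- The Euler form of Bondal's quiver. -/
def bondalChi (u v : Fin 3 → ℤ) : ℤ :=
  (∑ i, u i * v i) - 2 * (u 0 * v 1 + u 1 * v 2) + 2 * u 0 * v 2

/-- There is no numerically exceptional class v ∈ ℤ³ fully orthogonal to p = (1,1,1):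
no v with χ(v,v) = 1, χ(p,v) = 0 and χ(v,p) = 0. Hence the exceptional object P of
Bondal's quiver is numerically nonextendable. -/
theorem bondal_numerically_nonextendable :
    ¬ ∃ v : Fin 3 → ℤ, bondalChi v v = 1 ∧ bondalChi ![1,1,1] v = 0 ∧
      bondalChi v ![1,1,1] = 0 := by
  rintro ⟨v, h1, h2, -⟩
  simp only [bondalChi, Fin.sum_univ_three, Matrix.cons_val_zero, Matrix.cons_val_one,
    Matrix.head_cons, Matrix.cons_val_two, Matrix.tail_cons] at h1 h2
  nlinarith [sq_nonneg (v 0 - v 1 + v 2), h1, h2]
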